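/- Let π_0,…,π_s be reals that are either strictly increasing or strictly decreasing, let ω(0),…,ω(s) be strictly positive, set w(π_x) = [[0, ω(x)],[0,0]], and fix integers s > k ≥ 1. Let m_s be the solution of the discrete Riemann–Hilbert problem on {π_0,…,π_{s−1}} and m_{s+1} the solution on {π_0,…,π_s}, both with asymptotics m(ζ)·diag(ζ^{−k},ζ^{k}) → I as ζ → ∞, and let A_s = [[p_s, q_s],[r_s, −p_s]] be the matrix with A_s² = 0 and m_{s+1}(ζ) = (I + (ζ−π_s)^{−1}A_s)·m_s(ζ). Then p_s ≠ 0. -/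

import Mathlib

open Filter Topology Matrix Polynomial

noncomputable section

/-- 2×2 complex matrices. -/
abbrev Mat2 : Type := Matrix (Fin 2) (Fin 2) ℂ

/-- Entrywise complex differentiability (= analyticity) of a matrix-valued function on a set. -/
def EntryDiffOn (m : ℂ → Mat2) (U : Set ℂ) : Prop :=
  ∀ i j, DifferentiableOn ℂ (fun ζ => m ζ i j) U

/-- `m` solves the discrete Riemann–Hilbert problem `(Z, w)`: `m` is analytic off `Z`, has at
most a simple pole at each `x ∈ Z` (i.e. `ζ ↦ (ζ - x) • m ζ` extends analytically to a
neighbourhood of `x`), and the value at `x` of this extension (the residue of `m` at `x`)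
equals the limit of `m(ζ) * w(x)` as `ζ → x`. -/
def SolvesDRHP (Z : Finset ℂ) (w : ℂ → Mat2) (m : ℂ → Mat2) : Prop :=
  EntryDiffOn m ((Z : Set ℂ))ᶜ ∧
  ∀ x ∈ Z, ∃ g : ℂ → Mat2,
    EntryDiffOn g (((Z : Set ℂ))ᶜ ∪ {x}) ∧
    (∀ ζ, ζ ∉ (Z : Set ℂ) → g ζ = (ζ - x) • m ζ) ∧
    Filter.Tendsto (fun ζ => m ζ * w x) (𝓝[≠] x) (𝓝 (g x))

/-- The asymptotic condition `m(ζ) · diag(ζ^{-k}, ζ^k) → I` as `ζ → ∞`. -/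
def AsympId (k : ℕ) (m : ℂ → Mat2) : Prop :=
  Filter.Tendsto (fun ζ : ℂ => m ζ * Matrix.diagonal ![ζ⁻¹ ^ k, ζ ^ k])
    (Bornology.cobounded ℂ) (𝓝 1)

/-- The finite set `{π 0, …, π (s-1)}` regarded as a finite subset of `ℂ`. -/
def Zset (π : ℕ → ℝ) (s : ℕ) : Finset ℂ :=
  (Finset.range s).image fun x => (π x : ℂ)

/-!
The jump matrices are strictly upper triangular, so the first column of `m_s` has no poles and,
by Liouville, is polynomial: `m_s = [[P, C(ωP)], [Q, C(ωQ)]]`, where `C` is the Cauchy sum over the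
nodes. The decay of the second column at infinity makes `P` (of degree `k`) and `Q` (of degree
`k - 1`) orthogonal polynomials for the positive weights `ω`, so neither vanishes at `π_s`, which
lies outside the convex hull of the nodes. If `p_s = 0`, then `A_s² = 0` forces `q_s r_s = 0`, so a
row of `A_s` vanishes; in that row `m_{s+1} = m_s` is analytic at `π_s`, so its residue there is
zero, whereas the jump condition at `π_s` makes it `ω(s) P(π_s)` or `ω(s) Q(π_s)`.
-/

open Bornology

section Filters

lemma eventually_notMem_nhdsNE {X : Type*} [TopologicalSpace X] [T1Space X] (S : Finset X)
    (x : X) : ∀ᶠ ζ in 𝓝[≠] x, ζ ∉ (S : Set X) := by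
  have hne : ∀ z ∈ S, ∀ᶠ ζ in 𝓝[≠] x, ζ ≠ z := fun z _ => by
    rcases eq_or_ne x z with rfl | h
    · exact self_mem_nhdsWithin
    · exact eventually_ne_nhdsWithin h
  filter_upwards [(eventually_all_finset S).2 hne] with ζ h hζ using h ζ hζ rfl

lemma eventually_notMem_cobounded {E : Type*} [PseudoMetricSpace E] (S : Finset E) :
    ∀ᶠ ζ in cobounded E, ζ ∉ (S : Set E) :=
  S.finite_toSet.isBounded.compl

lemma tendsto_inv_sub_cobounded (c : ℂ) :
    Tendsto (fun ζ : ℂ => (ζ - c)⁻¹) (cobounded ℂ) (𝓝 0) :=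
  tendsto_inv₀_cobounded.comp (tendsto_sub_const_cobounded c)

lemma tendsto_inv_pow_cobounded {n : ℕ} (hn : n ≠ 0) :
    Tendsto (fun ζ : ℂ => ζ⁻¹ ^ n) (cobounded ℂ) (𝓝 0) := by
  simpa [zero_pow hn] using (tendsto_inv₀_cobounded (α := ℂ)).pow n

end Filters

section Removable

lemma differentiableOn_update_limUnder_of_tendsto_sub_mul {f : ℂ → ℂ} {s : Set ℂ} {x : ℂ}
    (hs : s ∈ 𝓝 x) (hd : DifferentiableOn ℂ f (s \ {x}))
    (hres : Tendsto (fun ζ => (ζ - x) * f ζ) (𝓝[≠] x) (𝓝 0)) :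
    DifferentiableOn ℂ (Function.update f x (limUnder (𝓝[≠] x) f)) s := by
  refine Complex.differentiableOn_update_limUnder_of_isLittleO hs hd ?_
  have hlin : Tendsto (fun ζ => (ζ - x) * f x) (𝓝[≠] x) (𝓝 0) := by
    simpa using ((continuous_sub_right x).tendsto' x 0 (sub_self x)).mul_const (f x)
      |>.mono_left nhdsWithin_le_nhds
  have hlim := hres.sub hlin
  rw [sub_zero] at hlim
  refine (Asymptotics.isLittleO_iff_tendsto' ?_).2 (hlim.congr' ?_)
  all_goals filter_upwards [self_mem_nhdsWithin] with ζ (hζ : ζ ≠ x)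
  · simp [sub_ne_zero.2 hζ]
  · rw [div_inv_eq_mul]; ring

/-- Riemann's removable singularity theorem for finitely many singularities. -/
theorem exists_differentiable_eq_of_tendsto_sub_mul (S : Finset ℂ) {f : ℂ → ℂ}
    (hd : DifferentiableOn ℂ f (S : Set ℂ)ᶜ)
    (hres : ∀ x ∈ S, Tendsto (fun ζ => (ζ - x) * f ζ) (𝓝[≠] x) (𝓝 0)) :
    ∃ F : ℂ → ℂ, Differentiable ℂ F ∧ ∀ ζ ∉ (S : Set ℂ), F ζ = f ζ := by
  classical
  induction S using Finset.induction generalizing f with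
  | empty => exact ⟨f, differentiableOn_univ.1 (by simpa using hd), fun _ _ => rfl⟩
  | @insert x T hxT ih =>
    set f₁ := Function.update f x (limUnder (𝓝[≠] x) f)
    have hf₁ : ∀ y, f₁ =ᶠ[𝓝[≠] y] f := fun y => by
      filter_upwards [eventually_notMem_nhdsNE {x} y] with ζ hζ
      exact Function.update_of_ne (by simpa using hζ) _ _
    have hd₁ : DifferentiableOn ℂ f₁ (T : Set ℂ)ᶜ := by
      refine differentiableOn_update_limUnder_of_tendsto_sub_mul
        (T.finite_toSet.isClosed.isOpen_compl.mem_nhds (by simpa using hxT))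
        (hd.mono fun ζ ⟨hζT, hζx⟩ => by simp_all) (hres x (T.mem_insert_self x))
    obtain ⟨F, hF, hFf₁⟩ := ih hd₁ fun y hy => (hres y (T.mem_insert_of_mem hy)).congr'
      ((hf₁ y).mono fun ζ hζ => by simp only [hζ])
    refine ⟨F, hF, fun ζ hζ => ?_⟩
    simp only [Finset.coe_insert, Set.mem_insert_iff, not_or] at hζ
    exact (hFf₁ ζ hζ.2).trans (Function.update_of_ne hζ.1 _ _)

end Removable

/-- Liouville's theorem for entire functions of polynomial growth. -/
theorem Differentiable.exists_polynomial_of_tendsto_mul_inv_pow (n : ℕ) {f : ℂ → ℂ} {c : ℂ}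
    (hf : Differentiable ℂ f) (hlim : Tendsto (fun ζ => f ζ * ζ⁻¹ ^ n) (cobounded ℂ) (𝓝 c)) :
    ∃ P : ℂ[X], P.natDegree ≤ n ∧ P.coeff n = c ∧ ∀ ζ, P.eval ζ = f ζ := by
  induction n generalizing f with
  | zero =>
    have hlim' : Tendsto f (cocompact ℂ) (𝓝 c) := by
      simpa [← Metric.cobounded_eq_cocompact] using hlim
    exact ⟨C c, by simp, by simp, fun ζ => by rw [eval_C, hf.apply_eq_of_tendsto_cocompact ζ hlim']⟩
  | succ n ih =>
    set g := dslope f 0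
    have hfg : ∀ ζ, f ζ = f 0 + ζ * g ζ := fun ζ => by
      have h := sub_smul_dslope f 0 ζ
      rw [sub_zero, smul_eq_mul] at h
      linear_combination -h
    have hg : Differentiable ℂ g := differentiableOn_univ.1 <|
      (Complex.differentiableOn_dslope Filter.univ_mem).2 hf.differentiableOn
    have hglim : Tendsto (fun ζ => g ζ * ζ⁻¹ ^ n) (cobounded ℂ) (𝓝 c) := by
      have h0 := (tendsto_inv_pow_cobounded n.succ_ne_zero).const_mul (f 0)
      rw [mul_zero] at h0
      refine (sub_zero c ▸ hlim.sub h0).congr' ?_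
      filter_upwards [eventually_ne_cobounded 0] with ζ hζ
      rw [hfg ζ, pow_succ']
      field_simp
      ring
    obtain ⟨P, hPdeg, hPc, hPg⟩ := ih hg hglim
    refine ⟨C (f 0) + X * P, ?_, by simp [coeff_X_mul, hPc], fun ζ => by simp [hPg, ← hfg]⟩
    exact natDegree_add_le_of_degree_le (by simp) <|
      natDegree_mul_le.trans (by simp only [natDegree_X]; omega)

section CauchySum

def cauchySum (Z : Finset ℂ) (a : ℂ → ℂ) (ζ : ℂ) : ℂ :=
  ∑ x ∈ Z, a x * (ζ - x)⁻¹

variable (Z : Finset ℂ) (a : ℂ → ℂ)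

lemma differentiableOn_cauchySum : DifferentiableOn ℂ (cauchySum Z a) (Z : Set ℂ)ᶜ :=
  DifferentiableOn.fun_sum fun x hx => ((differentiableOn_id.sub_const x).inv
    fun ζ (hζ : ζ ∉ (Z : Set ℂ)) h => hζ ((sub_eq_zero.1 h : ζ = x) ▸ hx)).const_mul (a x)

lemma tendsto_cauchySum_cobounded : Tendsto (cauchySum Z a) (cobounded ℂ) (𝓝 0) := by
  unfold cauchySum
  simpa using tendsto_finsetSum Z fun x _ => (tendsto_inv_sub_cobounded x).const_mul (a x)

lemma tendsto_sub_mul_cauchySum {x : ℂ} (hx : x ∈ Z) :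
    Tendsto (fun ζ => (ζ - x) * cauchySum Z a ζ) (𝓝[≠] x) (𝓝 (a x)) := by
  classical
  have hrest : ContinuousAt (cauchySum (Z.erase x) a) x :=
    ((differentiableOn_cauchySum _ a).differentiableAt <|
      (Z.erase x).finite_toSet.isClosed.isOpen_compl.mem_nhds (by simp)).continuousAt
  have hlim : Tendsto (fun ζ => a x + (ζ - x) * cauchySum (Z.erase x) a ζ) (𝓝[≠] x)
      (𝓝 (a x + (x - x) * cauchySum (Z.erase x) a x)) :=
    (((continuous_sub_right x).continuousAt.mul hrest).const_add (a x)).tendsto.mono_left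
      nhdsWithin_le_nhds
  rw [sub_self, zero_mul, add_zero] at hlim
  refine hlim.congr' ?_
  filter_upwards [self_mem_nhdsWithin] with ζ (hζ : ζ ≠ x)
  rw [cauchySum, cauchySum, ← Finset.add_sum_erase Z _ hx, mul_add, Finset.mul_sum]
  field_simp [sub_ne_zero.2 hζ]

lemma mul_cauchySum {ζ : ℂ} (hζ : ζ ∉ (Z : Set ℂ)) :
    ζ * cauchySum Z a ζ = ∑ x ∈ Z, a x + cauchySum Z (fun x => a x * x) ζ := by
  rw [cauchySum, cauchySum, Finset.mul_sum, ← Finset.sum_add_distrib]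
  refine Finset.sum_congr rfl fun x hx => ?_
  have : ζ - x ≠ 0 := sub_ne_zero.2 fun h => hζ (h ▸ hx)
  field_simp
  ring

lemma pow_mul_cauchySum {n : ℕ} (hmom : ∀ j < n, ∑ x ∈ Z, a x * x ^ j = 0) {ζ : ℂ}
    (hζ : ζ ∉ (Z : Set ℂ)) : ζ ^ n * cauchySum Z a ζ = cauchySum Z (fun x => a x * x ^ n) ζ := by
  induction n with
  | zero => simp
  | succ n ih =>
    rw [pow_succ', mul_assoc, ih fun j hj => hmom j (by omega), mul_cauchySum Z _ hζ,
      hmom n n.lt_succ_self, zero_add]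
    simp only [pow_succ, mul_assoc]

lemma tendsto_pow_succ_mul_cauchySum {n : ℕ} (hmom : ∀ j < n, ∑ x ∈ Z, a x * x ^ j = 0) :
    Tendsto (fun ζ => ζ ^ (n + 1) * cauchySum Z a ζ) (cobounded ℂ)
      (𝓝 (∑ x ∈ Z, a x * x ^ n)) := by
  have hlim := (tendsto_cauchySum_cobounded Z fun x => a x * x ^ n * x).const_add
    (∑ x ∈ Z, a x * x ^ n)
  rw [add_zero] at hlim
  refine hlim.congr' ?_
  filter_upwards [eventually_notMem_cobounded Z] with ζ hζ
  rw [pow_succ', mul_assoc, pow_mul_cauchySum Z a hmom hζ, mul_cauchySum Z _ hζ]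

theorem moments_of_tendsto_pow_mul_cauchySum {n : ℕ} {L : ℂ}
    (hlim : Tendsto (fun ζ => ζ ^ (n + 1) * cauchySum Z a ζ) (cobounded ℂ) (𝓝 L)) :
    (∀ j < n, ∑ x ∈ Z, a x * x ^ j = 0) ∧ ∑ x ∈ Z, a x * x ^ n = L := by
  induction n generalizing L with
  | zero => exact ⟨by simp, tendsto_nhds_unique (tendsto_pow_succ_mul_cauchySum Z a (by simp)) hlim⟩
  | succ n ih =>
    have hlim' : Tendsto (fun ζ => ζ ^ (n + 1) * cauchySum Z a ζ) (cobounded ℂ) (𝓝 0) := by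
      have := hlim.mul (tendsto_inv_pow_cobounded one_ne_zero)
      rw [mul_zero] at this
      refine this.congr' ?_
      filter_upwards [eventually_ne_cobounded 0] with ζ hζ
      field_simp
      ring
    obtain ⟨hlow, hn⟩ := ih hlim'
    have hmom : ∀ j < n + 1, ∑ x ∈ Z, a x * x ^ j = 0 := fun j hj =>
      (Nat.lt_succ_iff_lt_or_eq.1 hj).elim (hlow j) (· ▸ hn)
    exact ⟨hmom, tendsto_nhds_unique (tendsto_pow_succ_mul_cauchySum Z a hmom) hlim⟩

end CauchySum

section DRHP

variable {Z : Finset ℂ} {w m : ℂ → Mat2}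

lemma EntryDiffOn.continuousAt {U : Set ℂ} {y : ℂ} (h : EntryDiffOn m U) (hU : U ∈ 𝓝 y) :
    ContinuousAt m y :=
  continuousAt_pi.2 fun i => continuousAt_pi.2 fun j => ((h i j).differentiableAt hU).continuousAt

lemma SolvesDRHP.continuousAt (hm : SolvesDRHP Z w m) {y : ℂ} (hy : y ∉ Z) : ContinuousAt m y :=
  hm.1.continuousAt (Z.finite_toSet.isClosed.isOpen_compl.mem_nhds hy)

lemma SolvesDRHP.exists_residue (hm : SolvesDRHP Z w m) {x : ℂ} (hx : x ∈ Z) :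
    ∃ R : Mat2, Tendsto (fun ζ => (ζ - x) • m ζ) (𝓝[≠] x) (𝓝 R) ∧
      Tendsto (fun ζ => m ζ * w x) (𝓝[≠] x) (𝓝 R) := by
  obtain ⟨g, hgd, hgm, hglim⟩ := hm.2 x hx
  have hnhds : (Z : Set ℂ)ᶜ ∪ {x} ∈ 𝓝 x := by
    rw [Set.union_singleton]
    exact insert_mem_nhds_iff.2 (eventually_notMem_nhdsNE Z x)
  refine ⟨g x, ((hgd.continuousAt hnhds).tendsto.mono_left nhdsWithin_le_nhds).congr' ?_, hglim⟩
  filter_upwards [eventually_notMem_nhdsNE Z x] with ζ hζ using hgm ζ hζ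

lemma mul_nilpotent_apply_zero (M : Mat2) (c : ℂ) (i : Fin 2) : (M * !![0, c; 0, 0]) i 0 = 0 := by
  simp [Matrix.mul_apply, Fin.sum_univ_two]

lemma mul_nilpotent_apply_one (M : Mat2) (c : ℂ) (i : Fin 2) :
    (M * !![0, c; 0, 0]) i 1 = M i 0 * c := by
  simp [Matrix.mul_apply, Fin.sum_univ_two]

/-- Row `i` of the residue at `y` vanishes by continuity of `f`, while the jump condition makes its
second entry `f y 0 * c`. -/
lemma SolvesDRHP.apply_zero_eq_zero_of_eventuallyEq (hm : SolvesDRHP Z w m) {y c : ℂ}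
    (hy : y ∈ Z) (hwy : w y = !![0, c; 0, 0]) (hc : c ≠ 0) {i : Fin 2} {f : ℂ → Fin 2 → ℂ}
    (hf : ContinuousAt f y) (hmf : (fun ζ => m ζ i) =ᶠ[𝓝[≠] y] f) : f y 0 = 0 := by
  obtain ⟨R, hRm, hRw⟩ := hm.exists_residue hy
  have hRi : R i = 0 := by
    have h := ((continuous_sub_right y).continuousAt.smul hf).tendsto
    simp only [Pi.smul_apply', sub_self, zero_smul] at h
    refine tendsto_nhds_unique (hRm.apply_nhds i) ((h.mono_left nhdsWithin_le_nhds).congr' ?_)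
    filter_upwards [hmf] with ζ hζ
    show (ζ - y) • f ζ = _
    rw [← hζ]
    rfl
  have hlim : Tendsto (fun ζ => f ζ 0 * c) (𝓝[≠] y) (𝓝 (R i 1)) := by
    refine ((hRw.apply_nhds i).apply_nhds 1).congr' ?_
    filter_upwards [hmf] with ζ hζ
    rw [hwy, mul_nilpotent_apply_one, ← hζ]
  have hval := tendsto_nhds_unique hlim
    (((continuousAt_pi.1 hf 0).tendsto.mul_const c).mono_left nhdsWithin_le_nhds)
  rw [hRi] at hval
  exact (mul_eq_zero.1 hval.symm).resolve_right hc

variable {c : ℂ → ℂ}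

/-- The jump matrices only feed the first column into the second, so the first column has no
poles. -/
lemma SolvesDRHP.tendsto_sub_mul_apply_zero (hm : SolvesDRHP Z w m)
    (hw : ∀ x ∈ Z, w x = !![0, c x; 0, 0]) {x : ℂ} (hx : x ∈ Z) (i : Fin 2) :
    Tendsto (fun ζ => (ζ - x) * m ζ i 0) (𝓝[≠] x) (𝓝 0) := by
  obtain ⟨R, hRm, hRw⟩ := hm.exists_residue hx
  have hR : R i 0 = 0 := by
    refine tendsto_nhds_unique ((hRw.apply_nhds i).apply_nhds 0) ?_
    simp only [hw x hx, mul_nilpotent_apply_zero, tendsto_const_nhds]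
  exact hR ▸ (hRm.apply_nhds i).apply_nhds 0

lemma SolvesDRHP.exists_polynomial_eq_apply_zero (hm : SolvesDRHP Z w m)
    (hw : ∀ x ∈ Z, w x = !![0, c x; 0, 0]) (i : Fin 2) {k : ℕ} {e : ℂ}
    (hlim : Tendsto (fun ζ => m ζ i 0 * ζ⁻¹ ^ k) (cobounded ℂ) (𝓝 e)) :
    ∃ P : ℂ[X], P.natDegree ≤ k ∧ P.coeff k = e ∧ ∀ ζ ∉ (Z : Set ℂ), P.eval ζ = m ζ i 0 := by
  obtain ⟨F, hF, hFm⟩ := exists_differentiable_eq_of_tendsto_sub_mul Z (hm.1 i 0)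
    fun x hx => hm.tendsto_sub_mul_apply_zero hw hx i
  have hFlim : Tendsto (fun ζ => F ζ * ζ⁻¹ ^ k) (cobounded ℂ) (𝓝 e) := by
    refine hlim.congr' ?_
    filter_upwards [eventually_notMem_cobounded Z] with ζ hζ
    rw [hFm ζ hζ]
  obtain ⟨P, hdeg, hcoeff, hP⟩ := hF.exists_polynomial_of_tendsto_mul_inv_pow k hFlim
  exact ⟨P, hdeg, hcoeff, fun ζ hζ => (hP ζ).trans (hFm ζ hζ)⟩

lemma SolvesDRHP.apply_one_eq_cauchySum (hm : SolvesDRHP Z w m)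
    (hw : ∀ x ∈ Z, w x = !![0, c x; 0, 0]) (i : Fin 2) {P : ℂ[X]}
    (hP : ∀ ζ ∉ (Z : Set ℂ), P.eval ζ = m ζ i 0)
    (hdec : Tendsto (fun ζ => m ζ i 1) (cobounded ℂ) (𝓝 0)) :
    ∀ ζ ∉ (Z : Set ℂ), m ζ i 1 = cauchySum Z (fun x => c x * P.eval x) ζ := by
  set a := fun x => c x * P.eval x
  set e := fun ζ => m ζ i 1 - cauchySum Z a ζ
  have hres : ∀ x ∈ Z, Tendsto (fun ζ => (ζ - x) * e ζ) (𝓝[≠] x) (𝓝 0) := by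
    intro x hx
    obtain ⟨R, hRm, hRw⟩ := hm.exists_residue hx
    have hR : R i 1 = a x := by
      refine tendsto_nhds_unique ((hRw.apply_nhds i).apply_nhds 1) ?_
      refine (((P.continuous.tendsto x).const_mul (c x)).mono_left nhdsWithin_le_nhds).congr' ?_
      filter_upwards [eventually_notMem_nhdsNE Z x] with ζ hζ
      rw [hw x hx, mul_nilpotent_apply_one, hP ζ hζ, mul_comm]
    have h := ((hRm.apply_nhds i).apply_nhds 1).sub (tendsto_sub_mul_cauchySum Z a hx)
    rw [hR, sub_self] at h
    exact h.congr fun ζ => (mul_sub _ _ _).symm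
  obtain ⟨E, hE, hEe⟩ := exists_differentiable_eq_of_tendsto_sub_mul Z
    ((hm.1 i 1).sub (differentiableOn_cauchySum Z _)) hres
  have hElim : Tendsto E (cocompact ℂ) (𝓝 0) := by
    rw [← Metric.cobounded_eq_cocompact, ← sub_zero (0 : ℂ)]
    refine (hdec.sub (tendsto_cauchySum_cobounded Z a)).congr' ?_
    filter_upwards [eventually_notMem_cobounded Z] with ζ hζ
    exact (hEe ζ hζ).symm
  exact fun ζ hζ =>
    sub_eq_zero.1 <| (hEe ζ hζ).symm.trans (hE.apply_eq_of_tendsto_cocompact ζ hElim)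

lemma AsympId.tendsto_apply {k : ℕ} (h : AsympId k m) (i j : Fin 2) :
    Tendsto (fun ζ => m ζ i j * ![ζ⁻¹ ^ k, ζ ^ k] j) (cobounded ℂ) (𝓝 ((1 : Mat2) i j)) := by
  simpa [Matrix.mul_diagonal] using (h.apply_nhds i).apply_nhds j

theorem SolvesDRHP.exists_orthogonal_polynomial (hm : SolvesDRHP Z w m)
    (hw : ∀ x ∈ Z, w x = !![0, c x; 0, 0]) {n : ℕ} (hasymp : AsympId (n + 1) m) (i : Fin 2) :
    ∃ P : ℂ[X], P.natDegree ≤ n + 1 ∧ P.coeff (n + 1) = (1 : Mat2) i 0 ∧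
      (∀ ζ ∉ (Z : Set ℂ), P.eval ζ = m ζ i 0) ∧
      (∀ j < n, ∑ x ∈ Z, c x * P.eval x * x ^ j = 0) ∧
      ∑ x ∈ Z, c x * P.eval x * x ^ n = (1 : Mat2) i 1 := by
  have h0 : Tendsto (fun ζ => m ζ i 0 * ζ⁻¹ ^ (n + 1)) (cobounded ℂ) (𝓝 ((1 : Mat2) i 0)) := by
    simpa using hasymp.tendsto_apply i 0
  have h1 : Tendsto (fun ζ => ζ ^ (n + 1) * m ζ i 1) (cobounded ℂ) (𝓝 ((1 : Mat2) i 1)) := by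
    simpa [mul_comm] using hasymp.tendsto_apply i 1
  obtain ⟨P, hdeg, hcoeff, hP⟩ := hm.exists_polynomial_eq_apply_zero hw i h0
  have hdec : Tendsto (fun ζ => m ζ i 1) (cobounded ℂ) (𝓝 0) := by
    have h := h1.mul (tendsto_inv_pow_cobounded (n := n + 1) (by omega))
    rw [mul_zero] at h
    refine h.congr' ?_
    filter_upwards [eventually_ne_cobounded 0] with ζ hζ
    rw [mul_right_comm, ← mul_pow, mul_inv_cancel₀ hζ, one_pow, one_mul]
  have hrep := hm.apply_one_eq_cauchySum hw i hP hdec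
  refine ⟨P, hdeg, hcoeff, hP, moments_of_tendsto_pow_mul_cauchySum Z _ (h1.congr' ?_)⟩
  filter_upwards [eventually_notMem_cobounded Z] with ζ hζ
  rw [hrep ζ hζ]

end DRHP

section OrthogonalPolynomials

lemma sum_mul_eval_eq_zero_of_orthogonal {K ι : Type*} [CommSemiring K] (S : Finset ι)
    (x b : ι → K) {n : ℕ} (horth : ∀ j < n, ∑ i ∈ S, b i * x i ^ j = 0) {R : K[X]}
    (hR : R.natDegree < n) : ∑ i ∈ S, b i * R.eval (x i) = 0 := by
  simp_rw [eval_eq_sum_range' hR, Finset.mul_sum]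
  rw [Finset.sum_comm]
  refine Finset.sum_eq_zero fun j hj => ?_
  rw [← mul_zero (R.coeff j), ← horth j (Finset.mem_range.1 hj), Finset.mul_sum]
  exact Finset.sum_congr rfl fun i _ => by ring

lemma eq_zero_of_sum_mul_eq_zero {ι : Type*} {S : Finset ι} {a b : ι → ℝ}
    (ha : (∀ i ∈ S, 0 < a i) ∨ (∀ i ∈ S, a i < 0)) (hb : ∀ i ∈ S, 0 ≤ b i)
    (hsum : ∑ i ∈ S, a i * b i = 0) : ∀ i ∈ S, b i = 0 := by
  rcases ha with ha | ha
  · have h := (Finset.sum_eq_zero_iff_of_nonneg fun i hi =>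
      mul_nonneg (ha i hi).le (hb i hi)).1 hsum
    exact fun i hi => (mul_eq_zero.1 (h i hi)).resolve_left (ha i hi).ne'
  · have h := (Finset.sum_eq_zero_iff_of_nonpos fun i hi =>
      mul_nonpos_of_nonpos_of_nonneg (ha i hi).le (hb i hi)).1 hsum
    exact fun i hi => (mul_eq_zero.1 (h i hi)).resolve_left (ha i hi).ne

lemma eval_map_conj_ofReal (R : ℂ[X]) (x : ℝ) :
    (R.map (starRingEnd ℂ)).eval (x : ℂ) = starRingEnd ℂ (R.eval (x : ℂ)) := by
  rw [eval_map, ← eval₂_at_apply, Complex.conj_ofReal]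

/-- If `P = (X - y) R`, pairing `P` with `conj R` gives `∑ ν (x - y) |R x|² = 0`, a sum of terms of
one sign, so `R` vanishes at the `≥ n > deg R` nodes. -/
theorem eval_ne_zero_of_orthogonal {ι : Type*} {S : Finset ι} {x ν : ι → ℝ} {y : ℝ}
    (hx : Set.InjOn x S) (hν : ∀ i ∈ S, 0 < ν i) (hy : (∀ i ∈ S, y < x i) ∨ (∀ i ∈ S, x i < y))
    {n : ℕ} (hn : n ≤ S.card) {P : ℂ[X]} (hP : P ≠ 0) (hdeg : P.natDegree ≤ n)
    (horth : ∀ j < n, ∑ i ∈ S, (ν i : ℂ) * P.eval (x i : ℂ) * (x i : ℂ) ^ j = 0) :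
    P.eval (y : ℂ) ≠ 0 := by
  classical
  intro hroot
  obtain ⟨R, rfl⟩ := dvd_iff_isRoot.2 hroot
  have hR0 : R ≠ 0 := right_ne_zero_of_mul hP
  have hRdeg : R.natDegree < n := by
    rw [natDegree_mul (X_sub_C_ne_zero _) hR0, natDegree_X_sub_C] at hdeg
    omega
  have hpair : ∑ i ∈ S, ν i * (x i - y) * Complex.normSq (R.eval (x i : ℂ)) = 0 := by
    have h := sum_mul_eval_eq_zero_of_orthogonal S (fun i => (x i : ℂ)) _ horth
      (natDegree_map_le.trans_lt hRdeg : (R.map (starRingEnd ℂ)).natDegree < n)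
    refine Complex.ofReal_injective ?_
    rw [Complex.ofReal_zero, ← h]
    push_cast
    refine Finset.sum_congr rfl fun i _ => ?_
    rw [eval_map_conj_ofReal, eval_mul, eval_sub, eval_X, eval_C, ← Complex.mul_conj]
    ring
  have hsign : (∀ i ∈ S, 0 < ν i * (x i - y)) ∨ (∀ i ∈ S, ν i * (x i - y) < 0) :=
    hy.imp (fun h i hi => mul_pos (hν i hi) (sub_pos.2 (h i hi)))
      (fun h i hi => mul_neg_of_pos_of_neg (hν i hi) (sub_neg.2 (h i hi)))
  have hRS : ∀ i ∈ S, R.eval (x i : ℂ) = 0 := fun i hi => Complex.normSq_eq_zero.1 <|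
    eq_zero_of_sum_mul_eq_zero hsign (fun i _ => Complex.normSq_nonneg _) hpair i hi
  refine hR0 (eq_zero_of_natDegree_lt_card_of_eval_eq_zero' R (S.image fun i => (x i : ℂ))
    (by simpa using hRS) ?_)
  rw [Finset.card_image_of_injOn fun i hi j hj h => hx hi hj (Complex.ofReal_inj.1 h)]
  omega

end OrthogonalPolynomials

lemma Matrix.one_add_smul_mul_apply_of_apply_eq_zero {n R : Type*} [Fintype n] [DecidableEq n]
    [CommSemiring R] {A : Matrix n n R} {i : n} (hA : A i = 0) (u : R) (N : Matrix n n R) :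
    ((1 + u • A) * N) i = N i := by
  rw [add_mul, Matrix.one_mul]
  ext j
  simp [Matrix.mul_apply, hA]

lemma SolvesDRHP.apply_zero_eq_zero_of_row_eq_zero {Z Z' : Finset ℂ} {w m m' : ℂ → Mat2}
    (hm : SolvesDRHP Z w m) (hm' : SolvesDRHP Z' w m') {y c : ℂ} (hy : y ∈ Z') (hyZ : y ∉ Z)
    (hwy : w y = !![0, c; 0, 0]) (hc : c ≠ 0) {A : Mat2}
    (hrel : ∀ ζ ∉ (Z' : Set ℂ), m' ζ = (1 + (ζ - y)⁻¹ • A) * m ζ) {i : Fin 2} (hA : A i = 0) :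
    m y i 0 = 0 := by
  refine hm'.apply_zero_eq_zero_of_eventuallyEq hy hwy hc (i := i) (f := fun ζ => m ζ i)
    (continuousAt_pi.1 (hm.continuousAt hyZ) i) ?_
  filter_upwards [eventually_notMem_nhdsNE Z' y] with ζ hζ
  rw [hrel ζ hζ, Matrix.one_add_smul_mul_apply_of_apply_eq_zero hA]

lemma ofReal_notMem_Zset {π : ℕ → ℝ} {s : ℕ} {y : ℝ} (hy : ∀ t < s, π t ≠ y) :
    (y : ℂ) ∉ Zset π s := by
  simpa [Zset] using hy

lemma SolvesDRHP.apply_zero_ne_zero {s n : ℕ} {π ω : ℕ → ℝ} {w m : ℂ → Mat2}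
    (hm : SolvesDRHP (Zset π s) w m) (hasymp : AsympId (n + 1) m) (hns : n + 1 ≤ s)
    (hπ : Set.InjOn π (Finset.range s)) (hω : ∀ t < s, 0 < ω t)
    (hw : ∀ t < s, w (π t) = !![0, (ω t : ℂ); 0, 0]) {y : ℝ}
    (hy : (∀ t < s, y < π t) ∨ (∀ t < s, π t < y)) (i : Fin 2) : m y i 0 ≠ 0 := by
  have hwZ : ∀ z ∈ Zset π s, w z = !![0, w z 0 1; 0, 0] := by
    simp only [Zset, Finset.mem_image, Finset.mem_range]
    rintro _ ⟨t, ht, rfl⟩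
    simp [hw t ht]
  have hmom : ∀ (P : ℂ[X]) (j : ℕ), ∑ z ∈ Zset π s, w z 0 1 * P.eval z * z ^ j =
      ∑ t ∈ Finset.range s, (ω t : ℂ) * P.eval (π t : ℂ) * (π t : ℂ) ^ j := fun P j => by
    rw [Zset, Finset.sum_image fun t ht u hu h => hπ ht hu (Complex.ofReal_inj.1 h)]
    exact Finset.sum_congr rfl fun t ht => by simp [hw t (Finset.mem_range.1 ht)]
  have hyZ : (y : ℂ) ∉ Zset π s := ofReal_notMem_Zset fun t ht =>
    hy.elim (fun h => (h t ht).ne') fun h => (h t ht).ne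
  obtain ⟨P, hdeg, hcoeff, hPm, hlow, htop⟩ := hm.exists_orthogonal_polynomial hwZ hasymp i
  rw [← hPm _ hyZ]
  have hω' : ∀ t ∈ Finset.range s, 0 < ω t := by simpa using hω
  have hy' : (∀ t ∈ Finset.range s, y < π t) ∨ (∀ t ∈ Finset.range s, π t < y) := by simpa using hy
  obtain rfl | rfl : i = 0 ∨ i = 1 := by fin_cases i <;> simp
  · refine eval_ne_zero_of_orthogonal hπ hω' hy' (by simpa using hns)
      (by rintro rfl; simp at hcoeff) hdeg fun j hj => ?_
    rw [← hmom]
    rcases Nat.lt_succ_iff_lt_or_eq.1 hj with hj | rfl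
    exacts [hlow j hj, by simpa using htop]
  · refine eval_ne_zero_of_orthogonal hπ hω' hy' (by simp; omega) (by rintro rfl; simp at htop)
      (natDegree_le_pred hdeg (by simpa using hcoeff)) fun j hj => hmom P j ▸ hlow j hj

theorem stmt11_general (s k : ℕ) (hk1 : 1 ≤ k) (hks : k < s)
    (π ω : ℕ → ℝ)
    (hmono : (∀ i j, i < j → j ≤ s → π i < π j) ∨ (∀ i j, i < j → j ≤ s → π j < π i))
    (hω : ∀ x ≤ s, 0 < ω x)
    (w : ℂ → Mat2) (hw : ∀ x ≤ s, w (π x : ℂ) = !![0, (ω x : ℂ); 0, 0])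
    (m m' : ℂ → Mat2)
    (hm : SolvesDRHP (Zset π s) w m) (hma : AsympId k m)
    (hm' : SolvesDRHP (Zset π (s + 1)) w m')
    (p q r : ℂ)
    (hA2 : !![p, q; r, -p] * !![p, q; r, -p] = 0)
    (hrel : ∀ ζ : ℂ, ζ ∉ (Zset π (s + 1) : Set ℂ) →
      m' ζ = (1 + (ζ - (π s : ℂ))⁻¹ • !![p, q; r, -p]) * m ζ) :
    p ≠ 0 := by
  rintro rfl
  obtain ⟨n, rfl⟩ : ∃ n, k = n + 1 := ⟨k - 1, by omega⟩
  have hinj : Set.InjOn π (Set.Iic s) := by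
    rcases hmono with h | h
    · exact StrictMonoOn.injOn fun a _ b hb hab => h a b hab hb
    · exact StrictAntiOn.injOn fun a _ b hb hab => h a b hab hb
  have hside : (∀ t < s, π s < π t) ∨ (∀ t < s, π t < π s) :=
    hmono.symm.imp (fun h t ht => h t s ht le_rfl) fun h t ht => h t s ht le_rfl
  have hne : ∀ i, m (π s) i 0 ≠ 0 :=
    hm.apply_zero_ne_zero hma hks.le (hinj.mono fun t ht => by simp at ht ⊢; omega)
      (fun t ht => hω t ht.le) (fun t ht => hw t ht.le) hside
  have hqr : q * r = 0 := by
    simpa [Matrix.mul_apply, Fin.sum_univ_two] using congrFun (congrFun hA2 0) 0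
  have hrow := fun i (hA : !![(0 : ℂ), q; r, -0] i = 0) =>
    hm.apply_zero_eq_zero_of_row_eq_zero hm'
      (Finset.mem_image_of_mem _ (Finset.self_mem_range_succ s))
      (ofReal_notMem_Zset fun t ht h => ht.ne (hinj ht.le (Set.mem_Iic.2 le_rfl) h)) (hw s le_rfl)
      (Complex.ofReal_ne_zero.2 (hω s le_rfl).ne') hrel hA
  rcases mul_eq_zero.1 hqr with rfl | rfl
  · exact hne 0 (hrow 0 (by ext j; fin_cases j <;> simp))
  · exact hne 1 (hrow 1 (by ext j; fin_cases j <;> simp))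

/-- if the points `π 0, …, π s` are strictly monotone and `s > k ≥ 1`, the
entry `p_s` of the matrix `A_s` of the first Lax equation is nonzero. -/
theorem stmt11 (s k : ℕ) (hk1 : 1 ≤ k) (hks : k < s)
    (π ω : ℕ → ℝ)
    (hmono : (∀ i j, i < j → j ≤ s → π i < π j) ∨ (∀ i j, i < j → j ≤ s → π j < π i))
    (hω : ∀ x ≤ s, 0 < ω x)
    (w : ℂ → Mat2) (hw : ∀ x ≤ s, w (π x : ℂ) = !![0, (ω x : ℂ); 0, 0])
    (m m' : ℂ → Mat2)
    (hm : SolvesDRHP (Zset π s) w m) (hma : AsympId k m)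
    (hm' : SolvesDRHP (Zset π (s + 1)) w m') (hm'a : AsympId k m')
    (p q r : ℂ)
    (hA2 : !![p, q; r, -p] * !![p, q; r, -p] = 0)
    (hrel : ∀ ζ : ℂ, ζ ∉ (Zset π (s + 1) : Set ℂ) →
      m' ζ = (1 + (ζ - (π s : ℂ))⁻¹ • !![p, q; r, -p]) * m ζ) :
    p ≠ 0 :=
  stmt11_general s k hk1 hks π ω hmono hω w hw m m' hm hma hm' p q r hA2 hrel
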